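/- If u : ℝ → ℝ is measurable with |u(t)| ≤ 1 for all t, is 2π-periodic, and has zero mean on a period, then for every ω > 0, k > 0, and all t₀ ≤ t₁, one has |∫_{t₀}^{t₁} √ω · u(kωτ) dτ| ≤ 2π/(k√ω). In particular this bound tends to 0 as ω → ∞. -/

import Mathlib

open intervalIntegral Real

/-!
Whole periods contribute nothing to the integral of a periodic function with zero mean, so the
integral of `u` over any interval equals its integral over a piece shorter than one period and
is at most `2π` in absolute value. The substitution `x = kωτ` then divides this bound by `kω`,
while the amplitude `√ω` multiplies it, leaving `2π / (k√ω)`.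
-/

namespace Function.Periodic

variable {E : Type*} [NormedAddCommGroup E] [NormedSpace ℝ E] {f : ℝ → E} {T : ℝ}

theorem intervalIntegral_add_zsmul_eq_of_integral_eq_zero (hf : Periodic f T)
    (h_int : ∀ a b, IntervalIntegrable f MeasureTheory.volume a b)
    (hzero : ∫ x in 0..T, f x = 0) (a b : ℝ) (n : ℤ) :
    ∫ x in a..b + n • T, f x = ∫ x in a..b, f x := by
  rw [← integral_add_adjacent_intervals (h_int a b) (h_int b _),
    hf.intervalIntegral_add_zsmul_eq n b h_int, hf.intervalIntegral_add_eq b 0, zero_add, hzero,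
    smul_zero, add_zero]

theorem norm_intervalIntegral_le_of_integral_eq_zero (hf : Periodic f T) (hT : 0 < T)
    (h_int : ∀ a b, IntervalIntegrable f MeasureTheory.volume a b)
    (hzero : ∫ x in 0..T, f x = 0) {C : ℝ} (hC : ∀ x, ‖f x‖ ≤ C) (a b : ℝ) :
    ‖∫ x in a..b, f x‖ ≤ C * T := by
  obtain ⟨hab, hba⟩ := toIcoMod_mem_Ico hT a b
  have hC₀ : 0 ≤ C := (norm_nonneg _).trans (hC 0)
  calc ‖∫ x in a..b, f x‖ = ‖∫ x in a..toIcoMod hT a b, f x‖ := by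
        rw [← hf.intervalIntegral_add_zsmul_eq_of_integral_eq_zero h_int hzero a (toIcoMod hT a b)
          (toIcoDiv hT a b), toIcoMod_add_toIcoDiv_zsmul]
    _ ≤ C * |toIcoMod hT a b - a| := norm_integral_le_of_norm_le_const fun x _ ↦ hC x
    _ ≤ C * T := by
        rw [abs_of_nonneg (sub_nonneg.mpr hab)]
        exact mul_le_mul_of_nonneg_left (by linarith) hC₀

end Function.Periodic

theorem dither_integral_bound
    (u : ℝ → ℝ) (k ω : ℝ)
    (hmeas : Measurable u)
    (hbound : ∀ t : ℝ, |u t| ≤ 1)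
    (hper : ∀ t : ℝ, u (t + 2 * π) = u t)
    (hzero : ∫ τ in (0:ℝ)..(2 * π), u τ = 0)
    (hk : 0 < k) (hω : 0 < ω) :
    ∀ t₀ t₁ : ℝ, t₀ ≤ t₁ →
      |∫ τ in t₀..t₁, Real.sqrt ω * u (k * ω * τ)| ≤ 2 * π / (k * Real.sqrt ω) := by
  intro t₀ t₁ _
  have h_int (a b : ℝ) : IntervalIntegrable u MeasureTheory.volume a b :=
    intervalIntegrable_const.mono_fun' hmeas.aestronglyMeasurable
      (.of_forall fun x ↦ (Real.norm_eq_abs _).trans_le (hbound x))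
  have h_period (a b : ℝ) : |∫ x in a..b, u x| ≤ 2 * π := by
    simpa using Function.Periodic.norm_intervalIntegral_le_of_integral_eq_zero hper
      (by positivity) h_int hzero hbound a b
  have hsqrt : 0 < √ω := Real.sqrt_pos.mpr hω
  calc |∫ τ in t₀..t₁, √ω * u (k * ω * τ)|
      = √ω * (k * ω)⁻¹ * |∫ x in k * ω * t₀..k * ω * t₁, u x| := by
        rw [integral_const_mul, integral_comp_mul_left _ (by positivity), smul_eq_mul, abs_mul,
          abs_mul, abs_of_pos hsqrt, abs_of_pos (by positivity), ← mul_assoc]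
    _ ≤ √ω * (k * ω)⁻¹ * (2 * π) := by gcongr; exact h_period _ _
    _ = 2 * π / (k * √ω) := by
        field_simp
        rw [Real.sq_sqrt hω.le]
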